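/- For every positive integer k, the identity Σ_{i=1}^{4k} (-1)^i [(ε_i + ε_{4k+1}) - (ε_i - ε_{4k+1})] + Σ_{1 ≤ i < j ≤ 4k} [(-1)^{⌊(i+j)/2⌋}(ε_i + ε_j) + (-1)^{i+j}(ε_i - ε_j)] = 0 holds in ℝ^{4k+1}. -/
import Mathlib


noncomputable def g1 (s : ℕ) : ℝ := (-1) ^ ((s + 2) / 2) + (-1) ^ (s + 2)
noncomputable def g2 (s : ℕ) : ℝ := (-1) ^ ((s + 2) / 2) - (-1) ^ (s + 2)

lemma p1 (q : ℕ) : (-1 : ℝ) ^ (2 * q) = 1 := by simp [pow_mul]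
lemma p2 (q : ℕ) : (-1 : ℝ) ^ (2 * q + 1) = -1 := by simp [pow_add, pow_mul]

lemma g1_val (s : ℕ) : g1 s = if s % 4 = 1 then -2 else if s % 4 = 2 then 2 else 0 := by
  obtain ⟨q, r, hr, rfl⟩ : ∃ q r, r < 4 ∧ s = 4 * q + r := ⟨s / 4, s % 4, by omega, by omega⟩
  interval_cases r
  · rw [g1, show (4*q+0+2)/2 = 2*q+1 by omega, show 4*q+0+2 = 2*(2*q+1) by ring, p1, p2]
    norm_num [Nat.add_mod, Nat.mul_mod]
  · rw [g1, show (4*q+1+2)/2 = 2*q+1 by omega, show 4*q+1+2 = 2*(2*q+1)+1 by ring, p2, p2]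
    norm_num [Nat.add_mod, Nat.mul_mod]
  · rw [g1, show (4*q+2+2)/2 = 2*(q+1) by omega, show 4*q+2+2 = 2*(2*q+2) by ring, p1]
    norm_num [Nat.add_mod, Nat.mul_mod]
  · rw [g1, show (4*q+3+2)/2 = 2*(q+1) by omega, show 4*q+3+2 = 2*(2*q+2)+1 by ring, p1, p2]
    norm_num [Nat.add_mod, Nat.mul_mod]

lemma g2_val (s : ℕ) : g2 s = if s % 4 = 0 then -2 else if s % 4 = 3 then 2 else 0 := by
  obtain ⟨q, r, hr, rfl⟩ : ∃ q r, r < 4 ∧ s = 4 * q + r := ⟨s / 4, s % 4, by omega, by omega⟩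
  interval_cases r
  · rw [g2, show (4*q+0+2)/2 = 2*q+1 by omega, show 4*q+0+2 = 2*(2*q+1) by ring, p1, p2]
    norm_num [Nat.add_mod, Nat.mul_mod]
  · rw [g2, show (4*q+1+2)/2 = 2*q+1 by omega, show 4*q+1+2 = 2*(2*q+1)+1 by ring, p2, p2]
    norm_num [Nat.add_mod, Nat.mul_mod]
  · rw [g2, show (4*q+2+2)/2 = 2*(q+1) by omega, show 4*q+2+2 = 2*(2*q+2) by ring, p1]
    norm_num [Nat.add_mod, Nat.mul_mod]
  · rw [g2, show (4*q+3+2)/2 = 2*(q+1) by omega, show 4*q+3+2 = 2*(2*q+2)+1 by ring, p1, p2]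
    norm_num [Nat.add_mod, Nat.mul_mod]

lemma cyc1 (s : ℕ) : g1 s + g1 (s+1) + g1 (s+2) + g1 (s+3) = 0 := by
  have h : s % 4 = 0 ∨ s % 4 = 1 ∨ s % 4 = 2 ∨ s % 4 = 3 := by omega
  rcases h with h | h | h | h <;>
    rw [g1_val, g1_val, g1_val, g1_val,
      show (s+1) % 4 = (s%4+1)%4 by omega, show (s+2) % 4 = (s%4+2)%4 by omega,
      show (s+3) % 4 = (s%4+3)%4 by omega, h] <;> norm_num

lemma cyc2 (s : ℕ) : g2 s + g2 (s+1) + g2 (s+2) + g2 (s+3) = 0 := by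
  have h : s % 4 = 0 ∨ s % 4 = 1 ∨ s % 4 = 2 ∨ s % 4 = 3 := by omega
  rcases h with h | h | h | h <;>
    rw [g2_val, g2_val, g2_val, g2_val,
      show (s+1) % 4 = (s%4+1)%4 by omega, show (s+2) % 4 = (s%4+2)%4 by omega,
      show (s+3) % 4 = (s%4+3)%4 by omega, h] <;> norm_num

lemma per1 (s : ℕ) : g1 (s + 4) = g1 s := by
  rw [g1_val, g1_val, show (s+4) % 4 = s % 4 by omega]

lemma per2 (s : ℕ) : g2 (s + 4) = g2 s := by
  rw [g2_val, g2_val, show (s+4) % 4 = s % 4 by omega]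

lemma sumIco1 (a m : ℕ) : ∑ j ∈ Finset.Ico a (a+4), g1 (m + j) = 0 := by
  rw [Finset.sum_Ico_eq_sum_range, show a + 4 - a = 4 from by omega,
    Finset.sum_range_succ, Finset.sum_range_succ, Finset.sum_range_succ, Finset.sum_range_one,
    show m+(a+1) = (m+a)+1 from by ring, show m+(a+2) = (m+a)+2 from by ring,
    show m+(a+3) = (m+a)+3 from by ring, show m+(a+0) = m+a from by ring]
  exact cyc1 (m + a)

lemma sumIco2 (a m : ℕ) : ∑ i ∈ Finset.Ico a (a+4), g2 (i + m) = 0 := by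
  rw [Finset.sum_Ico_eq_sum_range, show a + 4 - a = 4 from by omega,
    Finset.sum_range_succ, Finset.sum_range_succ, Finset.sum_range_succ, Finset.sum_range_one,
    show (a+1)+m = (a+m)+1 from by ring, show (a+2)+m = (a+m)+2 from by ring,
    show (a+3)+m = (a+m)+3 from by ring, show (a+0)+m = a+m from by ring]
  exact cyc2 (a + m)

lemma key (k : ℕ) : ∀ m, m < 4 * k →
    (∑ j ∈ Finset.Ico (m+1) (4*k), g1 (m + j)) + ∑ i ∈ Finset.range m, g2 (i + m) = 0 := by
  induction k with
  | zero => omega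
  | succ k ih =>
    intro m hm
    by_cases hmk : m < 4 * k
    · rw [show 4*(k+1) = 4*k + 4 from by ring,
        ← Finset.sum_Ico_consecutive _ (show m+1 ≤ 4*k from by omega)
          (show 4*k ≤ 4*k+4 from by omega), sumIco1]
      have := ih m hmk; linarith
    · rcases Nat.eq_zero_or_pos k with rfl | hk
      · interval_cases m <;>
          norm_num [Finset.sum_Ico_eq_sum_range, Finset.sum_range_succ, g1_val, g2_val]
      · obtain ⟨m', rfl⟩ : ∃ m', m = m' + 4 := ⟨m - 4, by omega⟩
        have hm' : m' < 4 * k := by omega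
        have e2 : ∑ i ∈ Finset.range (m'+4), g2 (i + (m'+4))
            = ∑ i ∈ Finset.range m', g2 (i + m') := by
          rw [Finset.range_eq_Ico,
            ← Finset.sum_Ico_consecutive _ (show 0 ≤ m' from by omega)
              (show m' ≤ m'+4 from by omega), sumIco2, add_zero, ← Finset.range_eq_Ico]
          exact Finset.sum_congr rfl fun i _ => by
            rw [show i + (m'+4) = (i + m') + 4 from by ring, per2]
        have e1 : ∑ j ∈ Finset.Ico (m'+4+1) (4*(k+1)), g1 ((m'+4) + j)
            = ∑ j ∈ Finset.Ico (m'+1) (4*k), g1 (m' + j) := by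
          rw [Finset.sum_Ico_eq_sum_range, Finset.sum_Ico_eq_sum_range,
            show 4*(k+1) - (m'+4+1) = 4*k - (m'+1) from by omega]
          refine Finset.sum_congr rfl fun t _ => ?_
          rw [show m'+4 + (m'+4+1 + t) = ((m' + (m'+1+t)) + 4) + 4 from by ring, per1, per1]
        rw [e1, e2]
        exact ih m' hm'

/-- For every `k ≥ 1`, in `ℝ^{4k+1}`:
`∑_{i=1}^{4k} (-1)^i [(ε_i + ε_{4k+1}) - (ε_i - ε_{4k+1})]
 + ∑_{1 ≤ i < j ≤ 4k} [(-1)^{⌊(i+j)/2⌋}(ε_i + ε_j) + (-1)^{i+j}(ε_i - ε_j)] = 0`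
(indices written 1-based as in the paper). -/
theorem stmt_6 (k : ℕ) (hk : 1 ≤ k) :
    (∑ i : Fin (4 * k), ((-1 : ℝ) ^ ((i : ℕ) + 1)) •
        ((Pi.single (Fin.castSucc i) (1 : ℝ) + Pi.single (Fin.last (4 * k)) (1 : ℝ)) -
         (Pi.single (Fin.castSucc i) (1 : ℝ) - Pi.single (Fin.last (4 * k)) (1 : ℝ))))
    + ∑ i : Fin (4 * k), ∑ j ∈ Finset.univ.filter (fun j => i < j),
        (((-1 : ℝ) ^ (((((i : ℕ) + 1) + ((j : ℕ) + 1))) / 2)) •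
            (Pi.single (Fin.castSucc i) (1 : ℝ) + Pi.single (Fin.castSucc j) (1 : ℝ)) +
          ((-1 : ℝ) ^ (((i : ℕ) + 1) + ((j : ℕ) + 1))) •
            (Pi.single (Fin.castSucc i) (1 : ℝ) - Pi.single (Fin.castSucc j) (1 : ℝ)))
    = (0 : Fin (4 * k + 1) → ℝ) := by
  funext x
  simp only [Finset.sum_apply, Pi.add_apply, Pi.sub_apply, Pi.smul_apply, Pi.zero_apply,
    smul_eq_mul, Pi.single_apply]
  rcases Fin.eq_castSucc_or_eq_last x with ⟨m, rfl⟩ | rfl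
  · have hne : ¬ (m.castSucc = Fin.last (4 * k)) := (Fin.castSucc_lt_last m).ne
    simp only [Fin.castSucc_inj, hne, if_false]
    have hz1 : ∀ i : Fin (4 * k),
        (-1:ℝ) ^ ((i:ℕ) + 1) * ((if m = i then (1:ℝ) else 0) + 0 -
          ((if m = i then (1:ℝ) else 0) - 0)) = 0 := fun i => by ring_nf
    simp only [hz1, Finset.sum_const_zero, zero_add, Finset.sum_filter]
    have step : ∀ i j : Fin (4 * k),
        (if (i:ℕ) < (j:ℕ) then
          ((-1:ℝ) ^ (((i:ℕ) + 1 + ((j:ℕ) + 1)) / 2) *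
              ((if m = i then (1:ℝ) else 0) + if m = j then (1:ℝ) else 0) +
            (-1:ℝ) ^ ((i:ℕ) + 1 + ((j:ℕ) + 1)) *
              ((if m = i then (1:ℝ) else 0) - if m = j then (1:ℝ) else 0))
         else 0)
        = (if m = i then (if (i:ℕ) < (j:ℕ) then g1 ((i:ℕ) + (j:ℕ)) else 0) else 0)
          + (if m = j then (if (i:ℕ) < (j:ℕ) then g2 ((i:ℕ) + (j:ℕ)) else 0) else 0) := by
      intro i j
      have ea : (i:ℕ) + 1 + ((j:ℕ) + 1) = (i:ℕ) + (j:ℕ) + 2 := by ring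
      by_cases h : (i:ℕ) < (j:ℕ)
      · have hij : ¬ (i = j) := fun e => by subst e; exact lt_irrefl _ h
        have hji : ¬ (j = i) := fun e => hij e.symm
        by_cases h1 : m = i <;> by_cases h2 : m = j <;>
          simp [h, h1, h2, hij, hji, g1, g2, ea] <;> ring
      · simp [h]
    have hfin : ∀ i j : Fin (4 * k), (i < j) = ((i:ℕ) < (j:ℕ)) := fun i j => by
      rw [Fin.lt_def]
    simp only [hfin, step, Finset.sum_add_distrib]
    have pull : ∀ (c : Prop) [Decidable c] (f : Fin (4*k) → ℝ),
        (∑ j : Fin (4*k), if c then f j else 0) = if c then ∑ j : Fin (4*k), f j else 0 := by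
      intro c _ f; split_ifs <;> simp
    have A : (∑ x : Fin (4*k), ∑ y : Fin (4*k),
          if m = x then (if (x:ℕ) < (y:ℕ) then g1 ((x:ℕ)+(y:ℕ)) else 0) else 0)
        = ∑ y : Fin (4*k), if (m:ℕ) < (y:ℕ) then g1 ((m:ℕ)+(y:ℕ)) else 0 := by
      rw [Finset.sum_congr rfl fun x _ => pull _ _, Finset.sum_ite_eq]
      simp
    have B : (∑ x : Fin (4*k), ∑ y : Fin (4*k),
          if m = y then (if (x:ℕ) < (y:ℕ) then g2 ((x:ℕ)+(y:ℕ)) else 0) else 0)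
        = ∑ x : Fin (4*k), if (x:ℕ) < (m:ℕ) then g2 ((x:ℕ)+(m:ℕ)) else 0 := by
      rw [Finset.sum_comm, Finset.sum_congr rfl fun y _ => pull _ _, Finset.sum_ite_eq]
      simp
    rw [A, B,
      Fin.sum_univ_eq_sum_range (fun y => if (m:ℕ) < y then g1 ((m:ℕ)+y) else 0),
      Fin.sum_univ_eq_sum_range (fun x => if x < (m:ℕ) then g2 (x+(m:ℕ)) else 0),
      ← Finset.sum_filter, ← Finset.sum_filter,
      show (Finset.range (4*k)).filter (fun j => (m:ℕ) < j) = Finset.Ico ((m:ℕ)+1) (4*k) from by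
        ext a; simp; omega,
      show (Finset.range (4*k)).filter (fun i => i < (m:ℕ)) = Finset.range ((m:ℕ)) from by
        ext a; simp; have := m.isLt; omega]
    exact key k m m.isLt
  · have hne : ∀ i : Fin (4 * k), ¬ (Fin.last (4 * k) = i.castSucc) :=
      fun i => (Fin.castSucc_lt_last i).ne'
    simp only [hne, if_false, if_true, eq_self_iff_true]
    have h2 : ∀ i : Fin (4 * k),
        (-1:ℝ) ^ ((i:ℕ) + 1) * ((1:ℝ) - (0 - 1)) = (-2) * (-1) ^ (i:ℕ) :=
      fun i => by rw [pow_succ]; ring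
    simp only [add_zero, sub_zero, mul_zero, sub_self, zero_add, Finset.sum_const_zero]
    rw [Finset.sum_congr rfl fun (i : Fin (4*k)) _ => h2 i,
      Fin.sum_univ_eq_sum_range (fun i => (-2:ℝ) * (-1) ^ i), ← Finset.mul_sum,
      neg_one_geom_sum, if_pos ⟨2 * k, by ring⟩, mul_zero]
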